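/- Let A be a commutative ℚ-algebra and φ a ring endomorphism of A with φ^i = φ^j for some 1 ≤ i < j. Let M = (1−φ)(A) and let I = {a ∈ A : φ^r(a) = 0 for some r ≥ 1}. Then the radical of M equals the radical of I, where the radical of a subspace V is {a ∈ A : a^m ∈ V for all sufficiently large m}. -/

import Mathlib

/-!
Put `d = j - i`, so that `φ ^ (i + d) = φ ^ i`. If `a ^ m = b_m - φ b_m` for all `m ≥ 1`, the
`d` elements `x_k = φ ^ k (φ ^ i a)`, `k < d`, have power sums
`∑ x_k ^ m = φ ^ i b_m - φ ^ (i + d) b_m = 0` by telescoping. Newton's identities, in which only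
positive integers have to be cancelled, then kill all elementary symmetric functions of the
`x_k`, so `x_k ^ d = 0`. Thus `φ ^ i a` is nilpotent whenever `a` lies in the radical of `M`,
which puts `a` in the radical of `I`. Conversely `I ⊆ M`, because
`a - φ ^ r a = (1 - φ) (∑_{k < r} φ ^ k a)`.
-/

open Finset Polynomial

def powRadical {A : Type*} [Monoid A] (V : Set A) : Set A := {a | ∃ N, ∀ m ≥ N, a ^ m ∈ V}

theorem powRadical_mono {A : Type*} [Monoid A] {V W : Set A} (h : V ⊆ W) :
    powRadical V ⊆ powRadical W :=
  fun _ ⟨N, hN⟩ => ⟨N, fun m hm => h (hN m hm)⟩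

namespace Multiset

variable {R : Type*} [CommRing R]

theorem prod_X_sub_C_eq_X_pow_of_esymm_eq_zero (s : Multiset R)
    (h : ∀ t, 1 ≤ t → s.esymm t = 0) :
    (s.map fun r => X - C r).prod = X ^ card s := by
  rw [prod_X_sub_X_eq_sum_esymm, sum_range_succ', Finset.sum_eq_zero]
  · simp [esymm]
  · intro t _
    simp [h (t + 1) (by omega)]

theorem pow_card_eq_zero_of_esymm_eq_zero {s : Multiset R}
    (h : ∀ t, 1 ≤ t → s.esymm t = 0) {x : R} (hx : x ∈ s) : x ^ card s = 0 := by
  have hX := congrArg (eval x) (prod_X_sub_C_eq_X_pow_of_esymm_eq_zero s h)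
  rw [eval_multiset_prod, eval_pow, eval_X] at hX
  rw [← hX]
  exact prod_eq_zero (mem_map.mpr ⟨X - C x, mem_map_of_mem _ hx, by simp⟩)

end Multiset

namespace MvPolynomial

theorem aeval_esymm_eq_zero_of_aeval_psum_eq_zero {σ A : Type*} [Fintype σ]
    [CommRing A] [IsAddTorsionFree A] (x : σ → A)
    (h : ∀ m, 1 ≤ m → aeval x (psum σ ℤ m) = 0) {t : ℕ} (ht : 1 ≤ t) :
    aeval x (esymm σ ℤ t) = 0 := by
  have newton := congrArg (aeval x) (mul_esymm_eq_sum σ ℤ t)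
  rw [map_mul, map_natCast, map_mul, map_sum, sum_eq_zero, mul_zero, ← nsmul_eq_mul] at newton
  · exact (nsmul_eq_zero_iff_right (by omega)).mp newton
  · intro a ha
    rw [mem_filter, HasAntidiagonal.mem_antidiagonal] at ha
    rw [map_mul, h a.2 (by omega), mul_zero]

end MvPolynomial

theorem pow_card_eq_zero_of_sum_pow_eq_zero {ι A : Type*} [Fintype ι] [CommRing A]
    [IsAddTorsionFree A] (x : ι → A) (h : ∀ m, 1 ≤ m → ∑ k, x k ^ m = 0) (k : ι) :
    x k ^ Fintype.card ι = 0 := by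
  have hesymm : ∀ t, 1 ≤ t → (univ.val.map x).esymm t = 0 := fun t ht => by
    rw [← MvPolynomial.aeval_esymm_eq_multiset_esymm ι ℤ]
    exact MvPolynomial.aeval_esymm_eq_zero_of_aeval_psum_eq_zero x
      (fun m hm => by simpa [MvPolynomial.psum] using h m hm) ht
  simpa using Multiset.pow_card_eq_zero_of_esymm_eq_zero hesymm
    (Multiset.mem_map_of_mem x (mem_univ_val k))

namespace RingHom

variable {A : Type*} [CommRing A] (φ : A →+* A)

theorem pow_succ_apply (k : ℕ) (y : A) : (φ ^ (k + 1)) y = (φ ^ k) (φ y) := by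
  simp only [coe_pow, Function.iterate_succ_apply]

theorem pow_succ_apply' (k : ℕ) (y : A) : (φ ^ (k + 1)) y = φ ((φ ^ k) y) := by
  simp only [coe_pow, Function.iterate_succ_apply']

theorem sum_pow_apply_sub (y : A) (n : ℕ) :
    ∑ k ∈ Finset.range n, (φ ^ k) (y - φ y) = y - (φ ^ n) y := by
  have step (k : ℕ) : (φ ^ k) (y - φ y) = (φ ^ k) y - (φ ^ (k + 1)) y := by
    rw [map_sub, pow_succ_apply]
  simp_rw [step, sum_range_sub']
  rfl

theorem sub_pow_apply_mem_range (y : A) (n : ℕ) :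
    y - (φ ^ n) y ∈ Set.range fun b => b - φ b := by
  refine ⟨∑ k ∈ Finset.range n, (φ ^ k) y, ?_⟩
  simp_rw [map_sum, ← pow_succ_apply', ← sum_sub_distrib, sum_range_sub']
  rfl

theorem pow_apply_pow_eq_zero_of_forall_pow_mem_range [IsAddTorsionFree A] {i d : ℕ}
    (hd : 0 < d) (hφ : φ ^ (i + d) = φ ^ i) {a : A}
    (ha : ∀ m, 1 ≤ m → a ^ m ∈ Set.range fun b => b - φ b) :
    ((φ ^ i) a) ^ d = 0 := by
  have hsum (m : ℕ) (hm : 1 ≤ m) : ∑ k : Fin d, ((φ ^ (k : ℕ)) ((φ ^ i) a)) ^ m = 0 := by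
    obtain ⟨b, hb⟩ := ha m hm
    have hshift : (φ ^ i) (a ^ m) = (φ ^ i) b - φ ((φ ^ i) b) := by
      rw [← hb, map_sub, ← pow_succ_apply', pow_succ_apply]
    simp_rw [← map_pow, Fin.sum_univ_eq_sum_range (fun k => (φ ^ k) ((φ ^ i) (a ^ m))), hshift,
      sum_pow_apply_sub]
    rw [← comp_apply, ← mul_def, ← pow_add, add_comm, hφ, sub_self]
  simpa using pow_card_eq_zero_of_sum_pow_eq_zero _ hsum ⟨0, hd⟩

theorem isNilpotent_pow_apply_of_mem_powRadical [IsAddTorsionFree A] {i d : ℕ} (hd : 0 < d)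
    (hφ : φ ^ (i + d) = φ ^ i) {a : A} (ha : a ∈ powRadical (Set.range fun b => b - φ b)) :
    IsNilpotent ((φ ^ i) a) := by
  obtain ⟨N, hN⟩ := ha
  refine IsNilpotent.of_pow (m := N + 1) ⟨d, ?_⟩
  rw [← map_pow]
  exact φ.pow_apply_pow_eq_zero_of_forall_pow_mem_range hd hφ fun m hm => by
    rw [← pow_mul]
    exact hN _ (by nlinarith)

end RingHom

theorem stmt5 (A : Type*) [CommRing A] [Algebra ℚ A] (φ : A →+* A)
    (i j : ℕ) (hi : 1 ≤ i) (hij : i < j) (hφ : φ ^ i = φ ^ j)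
    (M : Set A) (hM : M = Set.range (fun a => a - φ a))
    (I : Set A) (hI : I = {a : A | ∃ r : ℕ, 1 ≤ r ∧ (φ ^ r) a = 0}) :
    {a : A | ∃ N : ℕ, ∀ m ≥ N, a ^ m ∈ M} = {a : A | ∃ N : ℕ, ∀ m ≥ N, a ^ m ∈ I} := by
  have := IsAddTorsionFree.of_module_rat A
  have hφ' : φ ^ (i + (j - i)) = φ ^ i := by rw [Nat.add_sub_cancel' hij.le, hφ]
  subst hM hI
  change powRadical _ = powRadical _
  refine subset_antisymm (fun a ha => ?_) (powRadical_mono ?_)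
  · obtain ⟨n, hn⟩ := φ.isNilpotent_pow_apply_of_mem_powRadical (by omega) hφ' ha
    exact ⟨n, fun m hm => ⟨i, hi, by rw [map_pow, pow_eq_zero_of_le hm hn]⟩⟩
  · rintro a ⟨r, -, hr⟩
    simpa [hr] using φ.sub_pow_apply_mem_range a r
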